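/- The one-relator group G = ⟨a, b ∣ (a^b)⁻¹ aˡ (a^b) = aᵏ⟩ is isomorphic to an HNN extension of the Baumslag-Solitar group BS(l,k): namely, G ≅ ⟨a₀, a₁, b ∣ a₁⁻¹ a₀ˡ a₁ = a₀ᵏ, b⁻¹ a₀ b = a₁⟩, the HNN extension of BS(l,k) = ⟨a₀, a₁ ∣ a₁⁻¹ a₀ˡ a₁ = a₀ᵏ⟩ with stable letter b conjugating the cyclic subgroup ⟨a₀⟩ onto ⟨a₁⟩. -/

import Mathlib

/-! Tietze transformation: the relation `b⁻¹ a₀ b = a₁` lets one eliminate the generator `a₁`,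
and substituting `a₁ = a₀^b` into `a₁⁻¹ a₀ˡ a₁ = a₀ᵏ` leaves exactly the defining relation of `G`. -/

namespace Stmt10

def a : FreeGroup (Fin 2) := FreeGroup.of 0
def b : FreeGroup (Fin 2) := FreeGroup.of 1

/-- `G = ⟨a,b ∣ (a^b)⁻¹ aˡ (a^b) = aᵏ⟩` where `a^b = b⁻¹ a b`. -/
def relG (l k : ℤ) : FreeGroup (Fin 2) :=
  ((b⁻¹ * a * b)⁻¹ * a ^ l * (b⁻¹ * a * b))⁻¹ * a ^ k

abbrev G (l k : ℤ) := PresentedGroup ({relG l k} : Set (FreeGroup (Fin 2)))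

/-- Generators of the HNN presentation: `0 ↦ a₀`, `1 ↦ a₁`, `2 ↦ b`. -/
def a0 : FreeGroup (Fin 3) := FreeGroup.of 0
def a1 : FreeGroup (Fin 3) := FreeGroup.of 1
def t : FreeGroup (Fin 3) := FreeGroup.of 2

/-- Relations `a₁⁻¹ a₀ˡ a₁ = a₀ᵏ` and `b⁻¹ a₀ b = a₁` of the HNN extension
`⟨a₀, a₁, b ∣ a₁⁻¹ a₀ˡ a₁ = a₀ᵏ, b⁻¹ a₀ b = a₁⟩` of `BS(l,k)`. -/
def relsHNN (l k : ℤ) : Set (FreeGroup (Fin 3)) :=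
  {a1⁻¹ * a0 ^ l * a1 * a0 ^ (-k), t⁻¹ * a0 * t * a1⁻¹}

end Stmt10

namespace PresentedGroup

variable {α : Type*} {rels : Set (FreeGroup α)}

lemma mk_eq_lift_of : mk rels = FreeGroup.lift (of (rels := rels)) :=
  FreeGroup.ext_hom _ _ fun _ ↦ rfl

lemma lift_of_eq_one_of_mem {r : FreeGroup α} (hr : r ∈ rels) :
    FreeGroup.lift (of (rels := rels)) r = 1 :=
  mk_eq_lift_of (rels := rels) ▸ one_of_mem hr

end PresentedGroup

namespace Stmt10

section

variable {l k : ℤ} {H : Type*} [Group H]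

lemma lift_relG_eq_one_iff (f : Fin 2 → H) :
    FreeGroup.lift f (relG l k) = 1 ↔
      ((f 1)⁻¹ * f 0 * f 1)⁻¹ * f 0 ^ l * ((f 1)⁻¹ * f 0 * f 1) = f 0 ^ k := by
  simp only [relG, a, b, map_mul, map_inv, map_zpow, FreeGroup.lift_apply_of]
  exact inv_mul_eq_one

lemma lift_relsHNN_eq_one_iff (f : Fin 3 → H) :
    (∀ r ∈ relsHNN l k, FreeGroup.lift f r = 1) ↔
      (f 1)⁻¹ * f 0 ^ l * f 1 = f 0 ^ k ∧ (f 2)⁻¹ * f 0 * f 2 = f 1 := by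
  simp only [relsHNN, Set.mem_insert_iff, Set.mem_singleton_iff, forall_eq_or_imp, forall_eq,
    a0, a1, t, map_mul, map_inv, map_zpow, FreeGroup.lift_apply_of, zpow_neg, mul_inv_eq_one]

end

variable (l k : ℤ)

lemma relG_of : ((.of 1 : G l k)⁻¹ * .of 0 * .of 1)⁻¹ * .of 0 ^ l * ((.of 1)⁻¹ * .of 0 * .of 1) =
    (.of 0 : G l k) ^ k :=
  (lift_relG_eq_one_iff _).mp (PresentedGroup.lift_of_eq_one_of_mem rfl)

lemma relsHNN_of : (.of 1 : PresentedGroup (relsHNN l k))⁻¹ * .of 0 ^ l * .of 1 = .of 0 ^ k ∧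
    (.of 2 : PresentedGroup (relsHNN l k))⁻¹ * .of 0 * .of 2 = .of 1 :=
  (lift_relsHNN_eq_one_iff _).mp fun _ ↦ PresentedGroup.lift_of_eq_one_of_mem

def toHNN : G l k →* PresentedGroup (relsHNN l k) :=
  PresentedGroup.toGroup (f := ![.of 0, .of 2]) fun r hr ↦ by
    obtain ⟨hBS, hconj⟩ := relsHNN_of l k
    rw [hr, lift_relG_eq_one_iff]
    simpa only [Matrix.cons_val_zero, Matrix.cons_val_one, Matrix.cons_val_fin_one, hconj]
      using hBS

def ofHNN : PresentedGroup (relsHNN l k) →* G l k :=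
  PresentedGroup.toGroup (f := ![.of 0, (.of 1)⁻¹ * .of 0 * .of 1, .of 1]) <| by
    exact (lift_relsHNN_eq_one_iff _).mpr ⟨relG_of l k, rfl⟩

def equivHNN : G l k ≃* PresentedGroup (relsHNN l k) :=
  MonoidHom.toMulEquiv (toHNN l k) (ofHNN l k)
    (PresentedGroup.ext fun i ↦ by fin_cases i <;> simp [toHNN, ofHNN])
    (PresentedGroup.ext fun i ↦ by fin_cases i <;> simp [toHNN, ofHNN, (relsHNN_of l k).2])

theorem stmt10_general (l k : ℤ) :
    Nonempty (G l k ≃* PresentedGroup (relsHNN l k)) :=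
  ⟨equivHNN l k⟩

/-- `G` is isomorphic to the HNN extension of `BS(l,k)` with stable letter `b`
conjugating `a₀` to `a₁`. -/
theorem stmt10 (l k : ℤ) (hl : l ≠ 0) (hk : k ≠ 0) :
    Nonempty (G l k ≃* PresentedGroup (relsHNN l k)) :=
  stmt10_general l k

end Stmt10
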